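/- Let f : {±1}^t → [-1,1] be any function and α ∈ (0,1]. If p is sampled uniformly at random from [-α, α] and, conditionally on p, x_1, …, x_t ∈ {±1} are sampled independently each with mean p, then E[ r(α,p)·f(x)·Σ_{i∈[t]} (x_i − p) + 2·(|p| − f(x)·p) ] = α, where r(α,p) = (α² − p²)/(1 − p²) if α² ≠ 1 and r(α,p) = 1 if α² = 1, and the expectation is over both p and x = (x_1,…,x_t). -/

import Mathlib

open MeasureTheory ENNReal

noncomputable section

/-- The ±1 real value of a Boolean sign. -/
def sgn (b : Bool) : ℝ := if b then 1 else -1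

/-- The discrete measure on a finite type with mass function `f`. -/
def discMeasure {α : Type*} [Fintype α] [MeasurableSpace α] (f : α → ℝ) : Measure α :=
  ∑ a : α, ENNReal.ofReal (f a) • Measure.dirac a

/-- Product distribution on `{±1}^d` (encoded as `Fin d → Bool`) with mean vector `p`. -/
def prodSigns (d : ℕ) (p : Fin d → ℝ) : Measure (Fin d → Bool) :=
  discMeasure fun x => ∏ j, (1 + sgn (x j) * p j) / 2

/-- A sample for indexed mean estimation: a vector in `{±1}^d` together with an index. -/
abbrev EstZ (d : ℕ) := (Fin d → Bool) × Fin d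

/-- A sample for indexed classification: `(x, j, y)`. -/
abbrev ClassZ (d : ℕ) := (Fin d → Bool) × Fin d × Bool

/-- Task distribution `P_X(p) ⊗ Det(j)` for indexed mean estimation. -/
def estDist (d : ℕ) (p : Fin d → ℝ) (j : Fin d) : Measure (EstZ d) :=
  (prodSigns d p).prod (Measure.dirac j)

/-- Distribution `R_{p,j} ⊗ Det(j)` of triples `(x, j, y)` for indexed classification:
`w` is drawn from the product distribution with mean vector `p`, `y` is a uniform sign,
`x_l = w_l` for `l ≠ j` and `x_j = w_j · y`. -/
def classDist (d : ℕ) (p : Fin d → ℝ) (j : Fin d) : Measure (ClassZ d) :=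
  Measure.map
    (fun wy : (Fin d → Bool) × Bool =>
      ((fun l => if l = j then (wy.1 l == wy.2) else wy.1 l), j, wy.2))
    ((prodSigns d p).prod (discMeasure fun _ : Bool => 1 / 2))

/-- Squared-error loss for indexed mean estimation. -/
def lossMean (pj phat : ℝ) : ℝ := (phat - pj) ^ 2 / 4

/-- Loss for indexed sign estimation; the estimate `s : Bool` encodes a sign in `{±1}`. -/
def lossSign (pj : ℝ) (s : Bool) : ℝ := if sgn s = Real.sign pj then 0 else |pj|

/-- Excess classification error of the classifier `f` on a distribution `P` over
samples `(x, j, y)`, where `f` is applied to coordinate `j` of `x`. -/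
def lossClass {d : ℕ} (P : Measure (ClassZ d)) (f : Bool → Bool) : ℝ :=
  (P {s | f (s.1 s.2.1) ≠ s.2.2}).toReal -
    ⨅ g : Bool → Bool, (P {s | g (s.1 s.2.1) ≠ s.2.2}).toReal

/-- Expected average loss of a multitask learning algorithm `M` on the tuple of tasks `P`,
with `n` i.i.d. samples per task. -/
def MultitaskError {Z H : Type*} [MeasurableSpace Z] [MeasurableSpace H] {t n : ℕ}
    (P : Fin t → Measure Z) (loss : Fin t → H → ℝ)
    (M : (Fin t → Fin n → Z) → Measure (Fin t → H)) : ℝ :=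
  ∫ S, (∫ g, (∑ i, loss i (g i)) / (t : ℝ) ∂(M S))
    ∂(Measure.pi fun i => Measure.pi fun _ : Fin n => P i)

/-- Joint output distribution of a billboard algorithm: the curator publishes a
representation drawn from `MBB S`, and each person `i` computes `Mpers (S i) h`. -/
def billboard {Z R H : Type*} [MeasurableSpace Z] [MeasurableSpace R] [MeasurableSpace H]
    {t n : ℕ} (MBB : (Fin t → Fin n → Z) → Measure R)
    (Mpers : (Fin n → Z) → R → Measure H) :
    (Fin t → Fin n → Z) → Measure (Fin t → H) :=
  fun S => (MBB S).bind fun h => Measure.pi fun i => Mpers (S i) h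

/-- Expected test-task loss of a metalearning pair `(Mmeta, Mpers)` on a fixed
`(t+1)`-tuple of tasks `P`, with `n` samples per training task and `npers`
personalization samples from the test task `P (Fin.last t)`. -/
def MetaError {Z R H : Type*} [MeasurableSpace Z] [MeasurableSpace R] [MeasurableSpace H]
    {t n npers : ℕ} (P : Fin (t + 1) → Measure Z) (loss : H → ℝ)
    (Mmeta : (Fin t → Fin n → Z) → Measure R)
    (Mpers : (Fin npers → Z) → R → Measure H) : ℝ :=
  ∫ S, (∫ T, (∫ g, loss g ∂((Mmeta S).bind fun h => Mpers T h))
      ∂(Measure.pi fun _ : Fin npers => P (Fin.last t)))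
    ∂(Measure.pi fun i : Fin t => Measure.pi fun _ : Fin n => P i.castSucc)

/-- Two indexed families differ in at most one entry. -/
def Neighbor {ι Z : Type*} (A B : ι → Z) : Prop := ∃ i, ∀ j, j ≠ i → A j = B j

/-- `(ε,δ)`-differential privacy with respect to changing one person's entire dataset. -/
def IsDP {D O : Type*} [MeasurableSpace O] {t : ℕ}
    (M : (Fin t → D) → Measure O) (ε δ : ℝ) : Prop :=
  ∀ S S' : Fin t → D, Neighbor S S' → ∀ E : Set O, MeasurableSet E →
    M S E ≤ ENNReal.ofReal (Real.exp ε) * M S' E + ENNReal.ofReal δ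

/-- Rényi divergence of order `a` between `P` and `Q`. -/
def renyiDiv {O : Type*} [MeasurableSpace O] (a : ℝ) (P Q : Measure O) : ℝ :=
  (a - 1)⁻¹ * Real.log (∫⁻ x, P.rnDeriv Q x ^ a ∂Q).toReal

/-- `P` has all Rényi divergences of order `a ∈ (1,∞)` with respect to `Q`
bounded by `ρ·a`. -/
def RenyiBounded {O : Type*} [MeasurableSpace O] (P Q : Measure O) (ρ : ℝ) : Prop :=
  P ≪ Q ∧ ∀ a : ℝ, 1 < a → renyiDiv a P Q ≤ ρ * a

/-- `ρ`-zero-concentrated differential privacy. -/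
def IsZCDP {D O : Type*} [MeasurableSpace O] {t : ℕ}
    (M : (Fin t → D) → Measure O) (ρ : ℝ) : Prop :=
  ∀ S S' : Fin t → D, Neighbor S S' → RenyiBounded (M S) (M S') ρ

/-- `(ε,δ)`-joint differential privacy: the joint distribution of all outputs except
person `i`'s is `(ε,δ)`-indistinguishable when person `i`'s dataset changes in one sample. -/
def IsJDP {Z H : Type*} [MeasurableSpace H] {t n : ℕ}
    (M : (Fin t → Fin n → Z) → Measure (Fin t → H)) (ε δ : ℝ) : Prop :=
  ∀ i : Fin t, ∀ S S' : Fin t → Fin n → Z,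
    (∀ j, j ≠ i → S j = S' j) → Neighbor (S i) (S' i) →
    ∀ E : Set ({j : Fin t // j ≠ i} → H), MeasurableSet E →
      Measure.map (fun g (j : {j : Fin t // j ≠ i}) => g j.1) (M S) E
        ≤ ENNReal.ofReal (Real.exp ε)
            * Measure.map (fun g (j : {j : Fin t // j ≠ i}) => g j.1) (M S') E
          + ENNReal.ofReal δ

/-- `ρ`-joint zero-concentrated differential privacy. -/
def IsJCDP {Z H : Type*} [MeasurableSpace H] {t n : ℕ}
    (M : (Fin t → Fin n → Z) → Measure (Fin t → H)) (ρ : ℝ) : Prop :=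
  ∀ i : Fin t, ∀ S S' : Fin t → Fin n → Z,
    (∀ j, j ≠ i → S j = S' j) → Neighbor (S i) (S' i) →
    RenyiBounded (Measure.map (fun g (j : {j : Fin t // j ≠ i}) => g j.1) (M S))
      (Measure.map (fun g (j : {j : Fin t // j ≠ i}) => g j.1) (M S')) ρ

/-- `ρ`-1-out-of-t zero-concentrated differential privacy: for distinct people `i ≠ k`,
person `k`'s output is `ρ`-zCDP-indistinguishable when person `i`'s dataset changes in
one sample. -/
def IsOneOutZCDP {Z H : Type*} [MeasurableSpace H] {t n : ℕ}
    (M : (Fin t → Fin n → Z) → Measure (Fin t → H)) (ρ : ℝ) : Prop :=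
  ∀ i k : Fin t, i ≠ k → ∀ S S' : Fin t → Fin n → Z,
    (∀ j, j ≠ i → S j = S' j) → Neighbor (S i) (S' i) →
    RenyiBounded (Measure.map (fun g => g k) (M S)) (Measure.map (fun g => g k) (M S')) ρ

/-- Uniform probability measure on the real interval `[a, b]`. -/
def unifIcc (a b : ℝ) : Measure ℝ :=
  (ENNReal.ofReal (b - a))⁻¹ • volume.restrict (Set.Icc a b)

/-- The reweighting factor in the generalized fingerprinting lemma. -/
def fpr (α p : ℝ) : ℝ := if α ^ 2 = 1 then 1 else (α ^ 2 - p ^ 2) / (1 - p ^ 2)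

/-! Write `g(p) = E_p[f(x)]`. Since `(1 - p²) ∂ₚ P_p(x) = P_p(x) Σᵢ (xᵢ - p)` and
`r(α, p) (1 - p²) = α² - p²`, the integrand equals `(α² - p²) g'(p) - 2p g(p) + 2|p|`, the
derivative of `(α² - p²) g(p) + p|p|`. The first term vanishes at `p = ±α`, so the integral over
`[-α, α]` is `2α²`, and averaging gives `α`. -/

open Finset

/-- `P_p(x)`: the probability of `x` when the `t` signs are independent with mean `p`. -/
def signMass (t : ℕ) (p : ℝ) (x : Fin t → Bool) : ℝ := ∏ i, (1 + sgn (x i) * p) / 2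

def signMassDeriv (t : ℕ) (p : ℝ) (x : Fin t → Bool) : ℝ :=
  ∑ i, (∏ j ∈ univ.erase i, (1 + sgn (x j) * p) / 2) * (sgn (x i) / 2)

def signExpectation (t : ℕ) (f : (Fin t → Bool) → ℝ) (p : ℝ) : ℝ := ∑ x, signMass t p x * f x

theorem sum_signMass (t : ℕ) (p : ℝ) : ∑ x, signMass t p x = 1 := by
  have h : ∑ b : Bool, (1 + sgn b * p) / 2 = 1 := by
    norm_num [sgn]
    ring
  simp only [signMass]
  rw [← Fintype.prod_sum fun i (b : Bool) => (1 + sgn b * p) / 2, h, prod_const_one]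

theorem hasDerivAt_signMass (t : ℕ) (x : Fin t → Bool) (p : ℝ) :
    HasDerivAt (signMass t · x) (signMassDeriv t p x) p := by
  have := HasDerivAt.fun_finsetProd (u := univ) (x := p)
    (fun i _ => (((hasDerivAt_id' p).const_mul (sgn (x i))).const_add 1).div_const 2)
  simp only [smul_eq_mul, mul_one] at this
  exact this

theorem continuous_signMassDeriv (t : ℕ) (x : Fin t → Bool) :
    Continuous (signMassDeriv t · x) := by
  unfold signMassDeriv
  fun_prop

theorem one_sub_sq_mul_signMassDeriv (t : ℕ) (p : ℝ) (x : Fin t → Bool) :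
    (1 - p ^ 2) * signMassDeriv t p x = signMass t p x * ∑ i, (sgn (x i) - p) := by
  rw [signMassDeriv, signMass, mul_sum, mul_sum]
  refine sum_congr rfl fun i _ => ?_
  rw [← mul_prod_erase _ _ (mem_univ i)]
  -- each factor satisfies `(1 - p²) · s / 2 = (1 + s p) / 2 · (s - p)` because `s² = 1`
  have hs : sgn (x i) * sgn (x i) = 1 := by cases x i <;> simp [sgn]
  linear_combination -(∏ j ∈ univ.erase i, (1 + sgn (x j) * p) / 2) * p / 2 * hs

theorem hasDerivAt_signExpectation (t : ℕ) (f : (Fin t → Bool) → ℝ) (p : ℝ) :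
    HasDerivAt (signExpectation t f) (∑ x, signMassDeriv t p x * f x) p :=
  HasDerivAt.fun_sum fun x _ => (hasDerivAt_signMass t x p).mul_const (f x)

theorem continuous_sum_signMassDeriv_mul (t : ℕ) (f : (Fin t → Bool) → ℝ) :
    Continuous fun p => ∑ x, signMassDeriv t p x * f x :=
  continuous_finsetSum _ fun x _ => (continuous_signMassDeriv t x).mul continuous_const

theorem hasDerivAt_mul_abs (x : ℝ) : HasDerivAt (fun y => y * |y|) (2 * |x|) x := by
  rcases eq_or_ne x 0 with rfl | hx
  · rw [hasDerivAt_iff_isLittleO_nhds_zero]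
    simp only [zero_add, abs_zero, mul_zero, sub_zero, smul_zero]
    have habs : (fun y : ℝ => |y|) =o[nhds 0] fun _ => (1 : ℝ) :=
      (Asymptotics.isLittleO_one_iff ℝ).2 (by simpa using continuous_abs.tendsto (0 : ℝ))
    simpa using (Asymptotics.isBigO_refl (fun y : ℝ => y) _).mul_isLittleO habs
  · refine ((hasDerivAt_id' x).mul (hasDerivAt_abs hx)).congr_deriv ?_
    rw [self_mul_sign]
    ring

theorem fpr_mul_one_sub_sq {α p : ℝ} (hp : p ^ 2 ≤ α ^ 2) (hα : α ^ 2 ≤ 1) :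
    fpr α p * (1 - p ^ 2) = α ^ 2 - p ^ 2 := by
  unfold fpr
  split_ifs with h
  · rw [h, one_mul]
  · exact div_mul_cancel₀ _ (sub_pos.2 (hp.trans_lt (hα.lt_of_ne h))).ne'

theorem sum_signMass_mul_fingerprint (t : ℕ) (f : (Fin t → Bool) → ℝ) {α p : ℝ}
    (hp : p ^ 2 ≤ α ^ 2) (hα : α ^ 2 ≤ 1) :
    ∑ x, signMass t p x * (fpr α p * f x * ∑ i, (sgn (x i) - p) + 2 * (|p| - f x * p)) =
      (α ^ 2 - p ^ 2) * ∑ x, signMassDeriv t p x * f x - 2 * p * signExpectation t f p +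
        2 * |p| :=
  calc _ = ∑ x, (fpr α p * (1 - p ^ 2) * (signMassDeriv t p x * f x) -
        2 * p * (signMass t p x * f x) + 2 * |p| * signMass t p x) :=
        sum_congr rfl fun x _ => by
          linear_combination (fpr α p * f x) * (one_sub_sq_mul_signMassDeriv t p x).symm
    _ = _ := by
      rw [sum_add_distrib, sum_sub_distrib, ← mul_sum, ← mul_sum, ← mul_sum, sum_signMass,
        fpr_mul_one_sub_sq hp hα, signExpectation, mul_one]

theorem integral_fingerprint_deriv {g g' : ℝ → ℝ} (hg : ∀ p, HasDerivAt g (g' p) p)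
    (hg' : Continuous g') (a : ℝ) :
    ∫ p in -a..a, ((a ^ 2 - p ^ 2) * g' p - 2 * p * g p + 2 * |p|) = 2 * a * |a| := by
  have hderiv (p : ℝ) : HasDerivAt (fun q => (a ^ 2 - q ^ 2) * g q + q * |q|)
      ((a ^ 2 - p ^ 2) * g' p - 2 * p * g p + 2 * |p|) p := by
    have h : HasDerivAt (fun q : ℝ => a ^ 2 - q ^ 2) (-(2 * p)) p := by
      simpa using (hasDerivAt_pow 2 p).const_sub (a ^ 2)
    exact ((h.mul (hg p)).add (hasDerivAt_mul_abs p)).congr_deriv (by ring)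
  have hcont : Continuous fun p => (a ^ 2 - p ^ 2) * g' p - 2 * p * g p + 2 * |p| := by
    have := continuous_iff_continuousAt.2 fun p => (hg p).continuousAt
    fun_prop
  rw [intervalIntegral.integral_eq_sub_of_hasDerivAt (fun p _ => hderiv p)
    (hcont.intervalIntegrable _ _)]
  simp only [neg_sq, sub_self, zero_mul, zero_add, abs_neg]
  ring

theorem integral_unifIcc {a b : ℝ} (hab : a ≤ b) (g : ℝ → ℝ) :
    ∫ p, g p ∂unifIcc a b = (b - a)⁻¹ * ∫ p in a..b, g p := by
  rw [unifIcc, integral_smul_measure, integral_Icc_eq_integral_Ioc,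
    ← intervalIntegral.integral_of_le hab, ENNReal.toReal_inv,
    ENNReal.toReal_ofReal (sub_nonneg.2 hab), smul_eq_mul]

theorem generalized_fingerprinting_lemma_general (t : ℕ) (f : (Fin t → Bool) → ℝ)
    (α : ℝ) (hα : α ∈ Set.Ioc (0 : ℝ) 1) :
    ∫ p, (∑ x : Fin t → Bool,
        (∏ i, (1 + sgn (x i) * p) / 2) *
          (fpr α p * f x * (∑ i, (sgn (x i) - p)) + 2 * (|p| - f x * p)))
      ∂(unifIcc (-α) α) = α := by
  obtain ⟨hα0, hα1⟩ := hα
  have hα2 : α ^ 2 ≤ 1 := pow_le_one₀ hα0.le hα1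
  have hintegrand : Set.EqOn _ _ (Set.uIcc (-α) α) := fun p hp =>
    have hp' : p ∈ Set.Icc (-α) α := Set.uIcc_of_le (neg_le_self hα0.le) ▸ hp
    sum_signMass_mul_fingerprint t f (sq_le_sq' hp'.1 hp'.2) hα2
  simp only [← signMass.eq_1]
  rw [integral_unifIcc (neg_le_self hα0.le), intervalIntegral.integral_congr hintegrand,
    integral_fingerprint_deriv (hasDerivAt_signExpectation t f)
      (continuous_sum_signMassDeriv_mul t f), abs_of_pos hα0]
  field_simp
  ring

/-- the generalized fingerprinting lemma. For `f : {±1}^t → [-1,1]` and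
`α ∈ (0,1]`, with `p` uniform on `[-α,α]` and `x₁,…,x_t` i.i.d. signs with mean `p`,
`E[ r(α,p)·f(x)·Σᵢ(xᵢ − p) + 2(|p| − f(x)·p) ] = α`. The inner expectation over `x` is
written as an explicit sum against the product mass function. -/
theorem generalized_fingerprinting_lemma (t : ℕ) (f : (Fin t → Bool) → ℝ)
    (hf : ∀ x, f x ∈ Set.Icc (-1 : ℝ) 1) (α : ℝ) (hα : α ∈ Set.Ioc (0 : ℝ) 1) :
    ∫ p, (∑ x : Fin t → Bool,
        (∏ i, (1 + sgn (x i) * p) / 2) *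
          (fpr α p * f x * (∑ i, (sgn (x i) - p)) + 2 * (|p| - f x * p)))
      ∂(unifIcc (-α) α) = α :=
  generalized_fingerprinting_lemma_general t f α hα

end
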